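/- For a tiled matrix of size p × q with p > q > 1, the critical path length of the tiled FlatTree algorithm (with TT kernels) equals 6p + 16q − 22. -/

import Mathlib

namespace TiledQR

/-- An elimination `elim(i, piv, k)`: tile `(i, k)` is zeroed out by an orthogonal
transformation combining row `i` with pivot row `piv`. -/
structure Elim where
  i : ℕ
  piv : ℕ
  k : ℕ
deriving DecidableEq

/-- `Before L e f` : the elimination `e` occurs strictly before `f` in the list `L`. -/
def Before (L : List Elim) (e f : Elim) : Prop :=
  ∃ a b : Fin L.length, (a : ℕ) < b ∧ L.get a = e ∧ L.get b = f

/-- `L` is a valid elimination list for a `p × q` tiled matrix: it contains exactly one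
elimination for every sub-diagonal tile `(i, k)` (`1 ≤ k ≤ min p q`, `k < i ≤ p`);
every elimination `elim(i, piv, k)` comes after all eliminations `elim(i, *, k')` and
`elim(piv, *, k')` with `k' < k`, and before the elimination `elim(piv, *, k)` of its
pivot row. -/
def ValidElimList (p q : ℕ) (L : List Elim) : Prop :=
  L.Nodup ∧
  (∀ e ∈ L, 1 ≤ e.k ∧ e.k ≤ min p q ∧ e.k < e.i ∧ e.i ≤ p ∧
      1 ≤ e.piv ∧ e.piv ≤ p ∧ e.piv ≠ e.i) ∧
  (∀ i k, 1 ≤ k → k ≤ min p q → k < i → i ≤ p → ∃! piv, Elim.mk i piv k ∈ L) ∧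
  (∀ a b : Fin L.length, (L.get b).k < (L.get a).k →
      ((L.get b).i = (L.get a).i ∨ (L.get b).i = (L.get a).piv) → (b : ℕ) < a) ∧
  (∀ a b : Fin L.length, (L.get b).k = (L.get a).k →
      (L.get b).i = (L.get a).piv → (a : ℕ) < b)

/-- The tasks of the tiled QR factorization with TT (triangle-on-top-of-triangle)
kernels. -/
inductive Task where
  | GEQRT (r k : ℕ)
  | UNMQR (r k j : ℕ)
  | TTQRT (i piv k : ℕ)
  | TTMQR (i piv k j : ℕ)
deriving DecidableEq

/-- Weights of the TT kernels, the unit being `n_b ^ 3 / 3` flops. -/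
def weight : Task → ℕ
  | .GEQRT _ _ => 4
  | .UNMQR _ _ _ => 6
  | .TTQRT _ _ _ => 2
  | .TTMQR _ _ _ _ => 6

/-- The tasks associated with a `p × q` tiled matrix and an elimination list `L`:
a factorization `GEQRT(r, k)` and updates `UNMQR(r, k, j)` (`k < j ≤ q`) for every tile
`(r, k)` with `k ≤ r ≤ p`, and, for every elimination `elim(i, piv, k)` of `L`, a task
`TTQRT(i, piv, k)` and updates `TTMQR(i, piv, k, j)` for `k < j ≤ q`. -/
def InTasks (p q : ℕ) (L : List Elim) : Task → Prop
  | .GEQRT r k => 1 ≤ k ∧ k ≤ min p q ∧ k ≤ r ∧ r ≤ p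
  | .UNMQR r k j => 1 ≤ k ∧ k ≤ min p q ∧ k ≤ r ∧ r ≤ p ∧ k < j ∧ j ≤ q
  | .TTQRT i piv k => Elim.mk i piv k ∈ L
  | .TTMQR i piv k j => Elim.mk i piv k ∈ L ∧ k < j ∧ j ≤ q

/-- The precedence (dependence) relation between the TT tasks.  Besides the flow
dependencies of the kernels, two tasks reading and writing a common tile
(a pivot tile reused by several eliminations of a column, or a pivot tile that is
subsequently zeroed out) are serialized in the order of the elimination list. -/
inductive Prec (L : List Elim) : Task → Task → Prop
  | geqrt_unmqr (r k j : ℕ) :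
      Prec L (.GEQRT r k) (.UNMQR r k j)
  | geqrt_ttqrt_row (i piv k : ℕ) :
      Prec L (.GEQRT i k) (.TTQRT i piv k)
  | geqrt_ttqrt_piv (i piv k : ℕ) :
      Prec L (.GEQRT piv k) (.TTQRT i piv k)
  | ttqrt_ttmqr (i piv k j : ℕ) :
      Prec L (.TTQRT i piv k) (.TTMQR i piv k j)
  | unmqr_ttmqr_row (i piv k j : ℕ) :
      Prec L (.UNMQR i k j) (.TTMQR i piv k j)
  | unmqr_ttmqr_piv (i piv k j : ℕ) :
      Prec L (.UNMQR piv k j) (.TTMQR i piv k j)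
  | ttmqr_geqrt (a b i k : ℕ) : 2 ≤ k → (a = i ∨ b = i) →
      Prec L (.TTMQR a b (k - 1) k) (.GEQRT i k)
  | ttqrt_serial (i i' piv k : ℕ) :
      Before L (Elim.mk i piv k) (Elim.mk i' piv k) →
      Prec L (.TTQRT i piv k) (.TTQRT i' piv k)
  | ttmqr_serial (i i' piv k j : ℕ) :
      Before L (Elim.mk i piv k) (Elim.mk i' piv k) →
      Prec L (.TTMQR i piv k j) (.TTMQR i' piv k j)
  | ttqrt_pivot_use (a i piv k : ℕ) :
      Prec L (.TTQRT a i k) (.TTQRT i piv k)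
  | ttmqr_pivot_use (a i piv k j : ℕ) :
      Prec L (.TTMQR a i k j) (.TTMQR i piv k j)

/-- A path in the weighted task DAG. -/
def IsPath (p q : ℕ) (L : List Elim) (path : List Task) : Prop :=
  (∀ t ∈ path, InTasks p q L t) ∧ path.Chain' (Prec L)

/-- The critical path length of the tiled algorithm given by the elimination list `L`:
the maximum total weight of a path in the weighted task DAG (equivalently, the makespan
of the earliest-start schedule with unboundedly many processors). -/
noncomputable def cpLength (p q : ℕ) (L : List Elim) : ℕ :=
  sSup { w : ℕ | ∃ path : List Task, IsPath p q L path ∧ w = (path.map weight).sum }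
/-- The FlatTree (Sameh-Kuck) elimination list: all eliminations of column `k` use the
diagonal row `k` as pivot; eliminations are listed column by column and, within a
column, by increasing row index. -/
def flatTreeList (p q : ℕ) : List Elim :=
  (List.range' 1 (min p q)).flatMap fun k =>
    (List.range' (k + 1) (p - k)).map fun i => Elim.mk i k k

/-!
Every task `t` finishes, in the earliest-start schedule, by time `finishBound t`: this bound
dominates the weight of `t`, grows by at least the weight of the successor along every
dependence, and its largest value over the tasks is `6p + 16q - 22`, reached at
`TTQRT(p, q, q)`. Conversely that value is the weight of the path
`GEQRT(1,1) → UNMQR(1,1,2) → TTMQR(2,1,1,2) → ⋯ → TTMQR(p,1,1,2)`, serialized on the pivot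
tile `(1, 2)`, followed for `k = 2, …, q - 1` by `GEQRT(p,k) → UNMQR(p,k,k+1) → TTMQR(p,k,k,k+1)`
and finally by `GEQRT(p,q) → TTQRT(p,q,q)`.
-/

section Potential

variable {α : Type*} {R : α → α → Prop} {S : Set α} {w φ : α → ℕ} {B : ℕ}

theorem potential_add_sum_map_le_of_isChain
    (hstep : ∀ a ∈ S, ∀ b ∈ S, R a b → φ a + w b ≤ φ b)
    (hB : ∀ a ∈ S, φ a ≤ B) :
    ∀ (l : List α) (a : α), (a :: l).IsChain R → (∀ x ∈ a :: l, x ∈ S) →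
      φ a + (l.map w).sum ≤ B
  | [], a, _, hS => by simpa using hB a (hS a List.mem_cons_self)
  | b :: l, a, hl, hS => by
    rw [List.isChain_cons_cons] at hl
    have hab := hstep a (hS a List.mem_cons_self) b (hS b (by simp)) hl.1
    have ih := potential_add_sum_map_le_of_isChain hstep hB l b hl.2
      fun x hx => hS x (List.mem_cons_of_mem a hx)
    simp only [List.map_cons, List.sum_cons]
    omega

theorem sum_map_le_of_isChain (hw : ∀ a ∈ S, w a ≤ φ a)
    (hstep : ∀ a ∈ S, ∀ b ∈ S, R a b → φ a + w b ≤ φ b) (hB : ∀ a ∈ S, φ a ≤ B)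
    {l : List α} (hl : l.IsChain R) (hS : ∀ x ∈ l, x ∈ S) : (l.map w).sum ≤ B := by
  cases l with
  | nil => simp
  | cons a l =>
    have htail := potential_add_sum_map_le_of_isChain hstep hB l a hl hS
    have hhead := hw a (hS a List.mem_cons_self)
    simp only [List.map_cons, List.sum_cons]
    omega

end Potential

theorem Before.rel_of_pairwise {L : List Elim} {e f : Elim} {R : Elim → Elim → Prop}
    (h : Before L e f) (hL : L.Pairwise R) : R e f := by
  obtain ⟨a, b, hab, rfl, rfl⟩ := h
  exact List.pairwise_iff_get.mp hL a b hab

theorem before_of_pairwise {L : List Elim} {e f : Elim} {R : Elim → Elim → Prop}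
    (hasymm : ∀ x y, R x y → ¬ R y x) (hL : L.Pairwise R) (he : e ∈ L) (hf : f ∈ L)
    (hef : R e f) : Before L e f := by
  obtain ⟨a, rfl⟩ := List.get_of_mem he
  obtain ⟨b, rfl⟩ := List.get_of_mem hf
  rcases lt_trichotomy (a : ℕ) b with hab | hab | hab
  · exact ⟨a, b, hab, rfl, rfl⟩
  · cases Fin.ext hab
    exact absurd hef (hasymm _ _ hef)
  · exact absurd (List.pairwise_iff_get.mp hL b a hab) (hasymm _ _ hef)

def HasPathTo (p q : ℕ) (L : List Elim) (t : Task) (w : ℕ) : Prop :=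
  ∃ path, IsPath p q L path ∧ path.getLast? = some t ∧ (path.map weight).sum = w

section HasPathTo

variable {p q : ℕ} {L : List Elim} {t u : Task} {w : ℕ}

theorem HasPathTo.single (ht : InTasks p q L t) : HasPathTo p q L t (weight t) :=
  ⟨[t], ⟨by simpa using ht, List.isChain_singleton t⟩, rfl, by simp⟩

theorem HasPathTo.snoc (h : HasPathTo p q L t w) (hu : InTasks p q L u) (htu : Prec L t u) :
    HasPathTo p q L u (w + weight u) := by
  obtain ⟨path, ⟨hmem, hchain⟩, hlast, rfl⟩ := h
  refine ⟨path ++ [u], ⟨?_, ?_⟩, by simp, by simp⟩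
  · simpa [or_imp, forall_and] using ⟨hmem, hu⟩
  · refine List.isChain_append.mpr ⟨hchain, List.isChain_singleton u, ?_⟩
    simp [hlast, htu]

theorem cpLength_eq_of_hasPathTo (hle : ∀ path, IsPath p q L path → (path.map weight).sum ≤ w)
    (ht : HasPathTo p q L t w) : cpLength p q L = w := by
  obtain ⟨path, hpath, -, hsum⟩ := ht
  refine IsGreatest.csSup_eq ⟨⟨path, hpath, hsum.symm⟩, ?_⟩
  rintro _ ⟨path, hpath, rfl⟩
  exact hle path hpath

end HasPathTo

theorem mem_flatTreeList {p q i piv k : ℕ} :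
    Elim.mk i piv k ∈ flatTreeList p q ↔
      piv = k ∧ 1 ≤ k ∧ k ≤ min p q ∧ k < i ∧ i ≤ p := by
  simp only [flatTreeList, List.mem_flatMap, List.mem_map, List.mem_range', Elim.mk.injEq]
  constructor
  · rintro ⟨k', ⟨a, ha, rfl⟩, i', ⟨b, hb, rfl⟩, rfl, rfl, rfl⟩
    omega
  · rintro ⟨rfl, h1, h2, h3, h4⟩
    exact ⟨piv, ⟨piv - 1, by omega, by omega⟩, i, ⟨i - piv - 1, by omega, by omega⟩,
      rfl, rfl, rfl⟩

theorem flatTreeList_pairwise (p q : ℕ) :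
    (flatTreeList p q).Pairwise fun e f => e.k < f.k ∨ e.k = f.k ∧ e.i < f.i := by
  simp only [flatTreeList, List.pairwise_flatMap, List.pairwise_map]
  refine ⟨fun k _ => (List.pairwise_lt_range' 1).imp fun h => by simp [h], ?_⟩
  refine (List.pairwise_lt_range' 1).imp fun hkk' => ?_
  simp only [List.mem_map]
  rintro _ ⟨i, -, rfl⟩ _ ⟨i', -, rfl⟩
  exact Or.inl hkk'

section FlatTree

variable {p q : ℕ} {t t' : Task}

/-- In column 1 the eliminations are serialized on the pivot tile, so `TTQRT(i,1,1)` and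
`TTMQR(i,1,1,j)` finish at `4 + 2(i-1)` and `10 + 6(i-1)`; every later column adds
`16 = 4 + 6 + 6` (`GEQRT`, `UNMQR`, `TTMQR`) to the finish times of a row. -/
def finishBound : Task → ℕ
  | .GEQRT r k => if k = 1 then 4 else 6 * r + 16 * k - 24
  | .UNMQR r k _ => if k = 1 then 10 else 6 * r + 16 * k - 18
  | .TTQRT i _ k => if k = 1 then 2 * i + 2 else 6 * i + 16 * k - 22
  | .TTMQR i _ k _ => 6 * i + 16 * k - 12

theorem weight_le_finishBound (ht : InTasks p q (flatTreeList p q) t) :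
    weight t ≤ finishBound t := by
  cases t <;> simp only [InTasks, mem_flatTreeList] at ht <;>
    simp only [weight, finishBound] <;> (try split_ifs) <;> omega

theorem finishBound_le (hq : 1 < q) (ht : InTasks p q (flatTreeList p q) t) :
    finishBound t ≤ 6 * p + 16 * q - 22 := by
  cases t <;> simp only [InTasks, mem_flatTreeList] at ht <;>
    simp only [finishBound] <;> (try split_ifs) <;> omega

theorem finishBound_add_weight_le (ht : InTasks p q (flatTreeList p q) t)
    (ht' : InTasks p q (flatTreeList p q) t') (h : Prec (flatTreeList p q) t t') :
    finishBound t + weight t' ≤ finishBound t' := by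
  cases h with
  | ttqrt_serial _ _ _ _ hbef | ttmqr_serial _ _ _ _ _ hbef =>
    have hlex := hbef.rel_of_pairwise (flatTreeList_pairwise p q)
    simp only [InTasks, mem_flatTreeList] at ht ht' hlex
    simp only [finishBound, weight]
    (try split_ifs) <;> omega
  | _ =>
    simp only [InTasks, mem_flatTreeList] at ht ht'
    simp only [finishBound, weight]
    (try split_ifs) <;> omega

theorem sum_map_weight_le_of_isPath_flatTreeList (hq : 1 < q) {path : List Task}
    (h : IsPath p q (flatTreeList p q) path) : (path.map weight).sum ≤ 6 * p + 16 * q - 22 :=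
  sum_map_le_of_isChain (S := InTasks p q (flatTreeList p q)) (fun _ => weight_le_finishBound)
    (fun _ ha _ hb => finishBound_add_weight_le ha hb) (fun _ => finishBound_le hq) h.2 h.1

theorem hasPathTo_ttmqr_column_one (hq : 1 < q) {i : ℕ} (hi : 2 ≤ i) (hip : i ≤ p) :
    HasPathTo p q (flatTreeList p q) (.TTMQR i 1 1 2) (6 * i + 4) := by
  induction i, hi using Nat.le_induction with
  | base =>
    have hU : HasPathTo p q (flatTreeList p q) (.UNMQR 1 1 2) 10 :=
      (HasPathTo.single (by simp only [InTasks]; omega)).snoc (by simp only [InTasks]; omega)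
        (.geqrt_unmqr 1 1 2)
    exact hU.snoc (by simp only [InTasks, mem_flatTreeList, true_and]; omega)
      (.unmqr_ttmqr_piv 2 1 1 2)
  | succ i hi ih =>
    have hmem : ∀ r, 1 < r → r ≤ p → Elim.mk r 1 1 ∈ flatTreeList p q := fun r h1 h2 =>
      mem_flatTreeList.mpr (by omega)
    have hbef : Before (flatTreeList p q) (.mk i 1 1) (.mk (i + 1) 1 1) :=
      before_of_pairwise (fun _ _ h h' => by omega) (flatTreeList_pairwise p q)
        (hmem i (by omega) (by omega)) (hmem (i + 1) (by omega) hip) (by simp)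
    exact (ih (by omega)).snoc ⟨hmem (i + 1) (by omega) hip, by omega, by omega⟩
      (.ttmqr_serial i (i + 1) 1 1 2 hbef)

theorem hasPathTo_geqrt_last_row (hqp : q ≤ p) {k : ℕ} (hk : 2 ≤ k) (hkq : k ≤ q) :
    HasPathTo p q (flatTreeList p q) (.GEQRT p k) (6 * p + 16 * k - 24) := by
  have hprec (m : ℕ) (hm : 1 ≤ m) :
      Prec (flatTreeList p q) (.TTMQR p m m (m + 1)) (.GEQRT p (m + 1)) := by
    simpa using Prec.ttmqr_geqrt (L := flatTreeList p q) p m p (m + 1) (by omega) (Or.inl rfl)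
  induction k, hk using Nat.le_induction with
  | base =>
    exact (hasPathTo_ttmqr_column_one (by omega) (by omega) le_rfl).snoc
      (by simp only [InTasks]; omega) (hprec 1 le_rfl)
  | succ k hk ih =>
    have hU := (ih (by omega)).snoc (u := .UNMQR p k (k + 1)) (by simp only [InTasks]; omega)
      (.geqrt_unmqr p k (k + 1))
    have hT := hU.snoc (u := .TTMQR p k k (k + 1))
      (by simp only [InTasks, mem_flatTreeList, true_and]; omega)
      (.unmqr_ttmqr_row p k k (k + 1))
    convert hT.snoc (by simp only [InTasks]; omega) (hprec k (by omega)) using 1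
    simp only [weight]
    omega

end FlatTree

/-- **Theorem 2 (1), case `p > q > 1`.** The critical path length of the tiled
FlatTree algorithm (with TT kernels) on a `p × q` matrix with `p > q > 1` is
`6p + 16q - 22`. -/
theorem flatTree_cpLength_rect (p q : ℕ) (hq : 1 < q) (hpq : q < p) :
    cpLength p q (flatTreeList p q) = 6 * p + 16 * q - 22 := by
  have hG := hasPathTo_geqrt_last_row hpq.le hq le_rfl
  have hQ : HasPathTo p q (flatTreeList p q) (.TTQRT p q q) (6 * p + 16 * q - 22) := by
    convert hG.snoc (u := .TTQRT p q q) (mem_flatTreeList.mpr (by omega))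
      (.geqrt_ttqrt_row p q q) using 1
    simp only [weight]
    omega
  exact cpLength_eq_of_hasPathTo (fun _ => sum_map_weight_le_of_isPath_flatTreeList hq) hQ

end TiledQR
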